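/- arXiv:2506.20296 — 3 statements merged into one kernel-verified Lean document; each statement's English description precedes it below -/
import Mathlib

section
/- For n = 8k − 2 with k a positive integer, there do not exist integers a, b, c, d, a*, b*, c*, d* satisfying: a² + b² + c² + d² = 4n + 2; a*² + b*² + c*² + d*² = 4n + 2; a = b + 2; a* = b* + 2; a, b, a*, b* odd; c, d, c*, d* even; a ≡ a* + 2, b ≡ b* + 2, c ≡ c* + 2, d ≡ d* + 2 (mod 4); c ≡ d (mod 4); c* ≡ d* (mod 4). -/
set_option maxHeartbeats 4000000 in
lemma zmod_key : ∀ b c d : ZMod 32, (b+2)^2+b^2+c^2+d^2 = 26 → 16 * b = 16 → 16 * c = 0 → 16 * d = 0 → 8 * (c - d) = 0 → 8 * (b - 1) = 0 := by decide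

lemma int_key (k b c d : ℤ) (h : (b+2)^2+b^2+c^2+d^2 = 32*k-6) (hb : Odd b)
    (hc : Even c) (hd : Even d) (hcd : c ≡ d [ZMOD 4]) : b ≡ 1 [ZMOD 4] := by
  obtain ⟨m, hm⟩ := hb
  obtain ⟨u, hu⟩ := hc
  obtain ⟨v, hv⟩ := hd
  have hcd' : (4:ℤ) ∣ c - d := Int.ModEq.dvd hcd.symm
  have h1 : (16*b : ℤ) ≡ 16 [ZMOD 32] := by unfold Int.ModEq; omega
  have h2 : (16*c : ℤ) ≡ 0 [ZMOD 32] := by unfold Int.ModEq; omega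
  have h3 : (16*d : ℤ) ≡ 0 [ZMOD 32] := by unfold Int.ModEq; omega
  have h4 : (8*(c-d) : ℤ) ≡ 0 [ZMOD 32] := by unfold Int.ModEq; omega
  have h0 : ((b+2)^2+b^2+c^2+d^2 : ℤ) ≡ 26 [ZMOD 32] := by
    rw [h]; unfold Int.ModEq; omega
  have e0 := (ZMod.intCast_eq_intCast_iff _ _ _).mpr h0
  have e1 := (ZMod.intCast_eq_intCast_iff _ _ _).mpr h1
  have e2 := (ZMod.intCast_eq_intCast_iff _ _ _).mpr h2
  have e3 := (ZMod.intCast_eq_intCast_iff _ _ _).mpr h3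
  have e4 := (ZMod.intCast_eq_intCast_iff _ _ _).mpr h4
  push_cast at e0 e1 e2 e3 e4
  have key := zmod_key (b : ZMod 32) (c : ZMod 32) (d : ZMod 32) e0 e1 e2 e3 e4
  have : ((8*(b-1) : ℤ) : ZMod 32) = 0 := by push_cast; exact key
  have hdvd : (32:ℤ) ∣ 8*(b-1) := by
    exact_mod_cast (ZMod.intCast_zmod_eq_zero_iff_dvd _ 32).mp this
  unfold Int.ModEq; omega

theorem no_normal_param_sets (k n : ℤ) (hk : 1 ≤ k) (hn : n = 8 * k - 2) :
    ¬ ∃ a b c d a' b' c' d' : ℤ,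
      a ^ 2 + b ^ 2 + c ^ 2 + d ^ 2 = 4 * n + 2 ∧
      a' ^ 2 + b' ^ 2 + c' ^ 2 + d' ^ 2 = 4 * n + 2 ∧
      a = b + 2 ∧ a' = b' + 2 ∧
      Odd a ∧ Odd b ∧ Odd a' ∧ Odd b' ∧
      Even c ∧ Even d ∧ Even c' ∧ Even d' ∧
      a ≡ a' + 2 [ZMOD 4] ∧ b ≡ b' + 2 [ZMOD 4] ∧
      c ≡ c' + 2 [ZMOD 4] ∧ d ≡ d' + 2 [ZMOD 4] ∧
      c ≡ d [ZMOD 4] ∧ c' ≡ d' [ZMOD 4] := by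
  rintro ⟨a, b, c, d, a', b', c', d', h1, h2, rfl, rfl, -, hb, -, hb', hc, hd, hc', hd',
    -, hbb', -, -, hcd, hcd'⟩
  have e1 : (b+2)^2+b^2+c^2+d^2 = 32*k-6 := by rw [h1]; ring_nf; omega
  have e2 : (b'+2)^2+b'^2+c'^2+d'^2 = 32*k-6 := by rw [h2]; ring_nf; omega
  have k1 := int_key k b c d e1 hb hc hd hcd
  have k2 := int_key k b' c' d' e2 hb' hc' hd' hcd'
  unfold Int.ModEq at k1 k2 hbb'
  omega
end

section
/- Let A, B, C, D be base sequences BS(m, n) and let a*, b*, c*, d* be the sums of the alternated sequences (aᵢ replaced by (−1)^{i−1}aᵢ, etc.). Then a*² + b*² + c*² + d*² = 2(m+n). -/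
/-- Nonperiodic autocorrelation of a finite integer sequence. -/
def autocorr (n : ℕ) (A : Fin n → ℤ) (i : ℕ) : ℤ :=
  ∑ j : Fin n, if h : (j : ℕ) + i < n then A j * A ⟨(j : ℕ) + i, h⟩ else 0

namespace BaseSeqAux

/-- Extension of a finite sequence by zeros. -/
def ext (n : ℕ) (a : Fin n → ℤ) : ℕ → ℤ := fun i => if h : i < n then a ⟨i, h⟩ else 0

lemma sq_expand (g : ℕ → ℤ) (n : ℕ) :
    (∑ i ∈ Finset.range n, g i) ^ 2 =
      ∑ i ∈ Finset.range n, g i ^ 2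
      + 2 * ∑ s ∈ Finset.Ico 1 n, ∑ j ∈ Finset.range (n - s), g j * g (j + s) := by
  induction n with
  | zero => simp
  | succ n ih =>
    rcases Nat.eq_zero_or_pos n with h | h
    · subst h; simp
    have step : ∀ s ∈ Finset.Ico 1 (n+1),
        ∑ j ∈ Finset.range (n + 1 - s), g j * g (j + s)
          = (∑ j ∈ Finset.range (n - s), g j * g (j + s)) + g (n - s) * g n := by
      intro s hs
      rw [Finset.mem_Ico] at hs
      have h1 : n + 1 - s = (n - s) + 1 := by omega
      have h2 : n - s + s = n := by omega
      rw [h1, Finset.sum_range_succ, h2]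
    rw [Finset.sum_range_succ, add_sq, ih, Finset.sum_range_succ (fun i => g i ^ 2),
      Finset.sum_congr rfl step, Finset.sum_add_distrib]
    have e1 : ∑ s ∈ Finset.Ico 1 (n+1), ∑ j ∈ Finset.range (n - s), g j * g (j + s)
        = ∑ s ∈ Finset.Ico 1 n, ∑ j ∈ Finset.range (n - s), g j * g (j + s) := by
      rw [Finset.sum_Ico_succ_top h]
      simp
    have e2 : ∑ s ∈ Finset.Ico 1 (n+1), g (n - s) * g n
        = (∑ j ∈ Finset.range n, g j) * g n := by
      rw [Finset.sum_Ico_eq_sum_range]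
      have : ∀ s, n - (1 + s) = n - 1 - s := by intro s; omega
      simp only [Nat.add_sub_cancel, this]
      rw [Finset.sum_mul, Finset.sum_range_reflect (fun j => g j * g n) n]
    rw [e1, e2]
    ring

lemma autocorr_eq (n : ℕ) (a : Fin n → ℤ) (s : ℕ) :
    autocorr n a s = ∑ j ∈ Finset.range (n - s), ext n a j * ext n a (j + s) := by
  have h1 : autocorr n a s
      = ∑ j ∈ Finset.range n, (if j + s < n then ext n a j * ext n a (j + s) else 0) := by
    rw [autocorr, ← Fin.sum_univ_eq_sum_range
      (fun j => if j + s < n then ext n a j * ext n a (j + s) else 0) n]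
    refine Finset.sum_congr rfl fun j _ => ?_
    by_cases h : (j : ℕ) + s < n
    · rw [dif_pos h, if_pos h, ext, ext, dif_pos j.isLt, dif_pos h]
    · rw [dif_neg h, if_neg h]
  rw [h1]
  rw [← Finset.sum_subset (Finset.range_subset_range.2 (Nat.sub_le n s))]
  · refine Finset.sum_congr rfl fun j hj => ?_
    rw [Finset.mem_range] at hj
    rw [if_pos (by omega)]
  · intro j _ hj
    rw [Finset.mem_range] at hj
    rw [if_neg (by omega)]

lemma autocorr_vanish (n : ℕ) (a : Fin n → ℤ) (s : ℕ) (hs : n ≤ s) :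
    autocorr n a s = 0 := by
  rw [autocorr]
  refine Finset.sum_eq_zero fun j _ => ?_
  rw [dif_neg (by omega)]

lemma key (n N : ℕ) (hnN : n ≤ N) (a : Fin n → ℤ) (ha : ∀ i, a i = 1 ∨ a i = -1) :
    (∑ i, (-1 : ℤ) ^ i.val * a i) ^ 2
      = (n : ℤ) + 2 * ∑ s ∈ Finset.Ico 1 N, (-1 : ℤ) ^ s * autocorr n a s := by
  have hsum : (∑ i : Fin n, (-1 : ℤ) ^ i.val * a i)
      = ∑ i ∈ Finset.range n, (-1 : ℤ) ^ i * ext n a i := by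
    rw [← Fin.sum_univ_eq_sum_range (fun i => (-1 : ℤ) ^ i * ext n a i) n]
    refine Finset.sum_congr rfl fun i _ => ?_
    rw [ext, dif_pos i.isLt]
  have hdiag : ∑ i ∈ Finset.range n, ((-1 : ℤ) ^ i * ext n a i) ^ 2 = (n : ℤ) := by
    rw [Finset.sum_congr rfl (fun i hi => ?_), Finset.sum_const, Finset.card_range,
      nsmul_eq_mul, mul_one]
    rw [Finset.mem_range] at hi
    rw [ext, dif_pos hi]
    rcases ha ⟨i, hi⟩ with h | h <;> rw [h] <;> ring_nf <;>
      rw [mul_comm i 2, pow_mul, neg_one_sq, one_pow]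
  have hcross : ∀ s, ∑ j ∈ Finset.range (n - s),
      ((-1 : ℤ) ^ j * ext n a j) * ((-1 : ℤ) ^ (j + s) * ext n a (j + s))
        = (-1 : ℤ) ^ s * autocorr n a s := by
    intro s
    rw [autocorr_eq, Finset.mul_sum]
    refine Finset.sum_congr rfl fun j _ => ?_
    have hj2 : ((-1 : ℤ) ^ j) * ((-1 : ℤ) ^ j) = 1 := by
      rw [← pow_add, ← two_mul, pow_mul, neg_one_sq, one_pow]
    calc ((-1 : ℤ) ^ j * ext n a j) * ((-1 : ℤ) ^ (j + s) * ext n a (j + s))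
        = ((-1 : ℤ) ^ j * (-1 : ℤ) ^ j) * ((-1 : ℤ) ^ s * (ext n a j * ext n a (j + s))) := by
          rw [pow_add]; ring
      _ = (-1 : ℤ) ^ s * (ext n a j * ext n a (j + s)) := by rw [hj2, one_mul]
  have hext : ∑ s ∈ Finset.Ico 1 n, (-1 : ℤ) ^ s * autocorr n a s
      = ∑ s ∈ Finset.Ico 1 N, (-1 : ℤ) ^ s * autocorr n a s := by
    refine Finset.sum_subset (Finset.Ico_subset_Ico_right hnN) fun s hs hs' => ?_
    rw [Finset.mem_Ico] at hs hs'
    rw [autocorr_vanish n a s (by omega), mul_zero]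
  rw [hsum, sq_expand, hdiag, Finset.sum_congr rfl (fun s _ => hcross s), hext]

end BaseSeqAux

theorem base_seq_alt_sum_of_squares (m n : ℕ)
    (A B : Fin m → ℤ) (C D : Fin n → ℤ)
    (hA : ∀ i, A i = 1 ∨ A i = -1) (hB : ∀ i, B i = 1 ∨ B i = -1)
    (hC : ∀ i, C i = 1 ∨ C i = -1) (hD : ∀ i, D i = 1 ∨ D i = -1)
    (hpos : ∀ i : ℕ, 1 ≤ i →
      autocorr m A i + autocorr m B i + autocorr n C i + autocorr n D i = 0) :
    (∑ i, (-1 : ℤ) ^ i.val * A i) ^ 2 + (∑ i, (-1 : ℤ) ^ i.val * B i) ^ 2 +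
    (∑ i, (-1 : ℤ) ^ i.val * C i) ^ 2 + (∑ i, (-1 : ℤ) ^ i.val * D i) ^ 2
      = 2 * ((m : ℤ) + (n : ℤ)) := by
  have hm : m ≤ m + n := Nat.le_add_right m n
  have hn : n ≤ m + n := Nat.le_add_left n m
  rw [BaseSeqAux.key m (m + n) hm A hA, BaseSeqAux.key m (m + n) hm B hB,
    BaseSeqAux.key n (m + n) hn C hC, BaseSeqAux.key n (m + n) hn D hD]
  have hz : ∑ s ∈ Finset.Ico 1 (m + n), (-1 : ℤ) ^ s * autocorr m A s
      + ∑ s ∈ Finset.Ico 1 (m + n), (-1 : ℤ) ^ s * autocorr m B s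
      + ∑ s ∈ Finset.Ico 1 (m + n), (-1 : ℤ) ^ s * autocorr n C s
      + ∑ s ∈ Finset.Ico 1 (m + n), (-1 : ℤ) ^ s * autocorr n D s = 0 := by
    rw [← Finset.sum_add_distrib, ← Finset.sum_add_distrib, ← Finset.sum_add_distrib]
    refine Finset.sum_eq_zero fun s hs => ?_
    rw [Finset.mem_Ico] at hs
    have h := hpos s hs.1
    calc (-1 : ℤ) ^ s * autocorr m A s + (-1 : ℤ) ^ s * autocorr m B s
          + (-1 : ℤ) ^ s * autocorr n C s + (-1 : ℤ) ^ s * autocorr n D s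
        = (-1 : ℤ) ^ s * (autocorr m A s + autocorr m B s + autocorr n C s + autocorr n D s) := by
          ring
      _ = 0 := by rw [h, mul_zero]
  linarith
end

section
/- Let A, B, C, D be base sequences BS(n+1, n) and for fixed m ≥ 2 define k_{im} = Σ_{j ≡ i (mod m)} aⱼ and similarly r, p, q for B, C, D. Then Σᵢ k_{im}² + Σᵢ r_{im}² + Σᵢ p_{im}² + Σᵢ q_{im}² = 4n + 2 when evaluated with all autocorrelation conditions; in particular, setting m ≥ n+1 recovers Σaᱼ² etc., and for m = 1 it gives a² + b² + c² + d² = 4n + 2. -/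
/-- Sum of the terms of `A` whose (1-based) index is congruent to `i` modulo `m`. -/
def residueSum (n : ℕ) (A : Fin n → ℤ) (m i : ℕ) : ℤ :=
  ∑ j ∈ Finset.univ.filter (fun j : Fin n => ((j : ℕ) + 1) % m = i), A j

lemma autocorr_zero' (N : ℕ) (A : Fin N → ℤ) :
    autocorr N A 0 = ∑ j : Fin N, A j * A j := by
  unfold autocorr
  refine Finset.sum_congr rfl fun j _ => ?_
  rw [dif_pos (by omega : (j:ℕ) + 0 < N)]
  simp

lemma autocorr_of_ge' (N t : ℕ) (A : Fin N → ℤ) (h : N ≤ t) :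
    autocorr N A t = 0 := by
  unfold autocorr
  exact Finset.sum_eq_zero fun j _ => by rw [dif_neg (by omega)]

lemma key_residue (N m : ℕ) (hm : 1 ≤ m) (A : Fin N → ℤ) :
    (∑ i ∈ Finset.range m, (residueSum N A m i) ^ 2)
      = autocorr N A 0 +
        2 * ∑ t ∈ (Finset.range N).filter (fun t => 1 ≤ t ∧ m ∣ t), autocorr N A t := by
  have step1 : (∑ i ∈ Finset.range m, (residueSum N A m i) ^ 2)
      = ∑ j : Fin N, ∑ j' : Fin N,
          if ((j':ℕ)+1) % m = ((j:ℕ)+1) % m then A j * A j' else 0 := by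
    calc ∑ i ∈ Finset.range m, (residueSum N A m i) ^ 2
        = ∑ i ∈ Finset.range m,
            ∑ j ∈ Finset.univ.filter (fun j : Fin N => ((j:ℕ)+1) % m = i),
              (∑ j' ∈ Finset.univ.filter
                  (fun j' : Fin N => ((j':ℕ)+1) % m = ((j:ℕ)+1) % m), A j * A j') := by
          refine Finset.sum_congr rfl fun i _ => ?_
          rw [residueSum, sq, Finset.sum_mul_sum]
          refine Finset.sum_congr rfl fun j hj => ?_
          have hji : ((j:ℕ)+1) % m = i := (Finset.mem_filter.mp hj).2
          rw [hji]
      _ = ∑ j : Fin N, ∑ j' ∈ Finset.univ.filter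
            (fun j' : Fin N => ((j':ℕ)+1) % m = ((j:ℕ)+1) % m), A j * A j' :=
          Finset.sum_fiberwise_of_maps_to
            (fun j _ => Finset.mem_range.mpr (Nat.mod_lt _ hm)) _
      _ = _ := Finset.sum_congr rfl fun j _ => Finset.sum_filter _ _
  have hterm : ∀ (t : ℕ) (j : Fin N),
      (if (1 ≤ t ∧ m ∣ t) then
        (if h : (j:ℕ)+t < N then A j * A ⟨(j:ℕ)+t, h⟩ else 0) else 0)
      = ∑ j' : Fin N,
          if ((j':ℕ) = (j:ℕ)+t ∧ 1 ≤ t ∧ m ∣ t) then A j * A j' else 0 := by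
    intro t j
    by_cases hq : 1 ≤ t ∧ m ∣ t
    · rw [if_pos hq]
      by_cases hlt : (j:ℕ)+t < N
      · rw [dif_pos hlt]
        rw [Finset.sum_eq_single_of_mem (⟨(j:ℕ)+t, hlt⟩ : Fin N) (Finset.mem_univ _)
          (fun b _ hb => if_neg (by rintro ⟨h1, -, -⟩; exact hb (Fin.ext h1)))]
        rw [if_pos ⟨rfl, hq⟩]
      · rw [dif_neg hlt]
        refine (Finset.sum_eq_zero fun j' _ => if_neg ?_).symm
        rintro ⟨h1, -, -⟩
        exact hlt (h1 ▸ j'.isLt)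
    · rw [if_neg hq]
      exact (Finset.sum_eq_zero fun j' _ =>
        if_neg (by rintro ⟨-, h2, h3⟩; exact hq ⟨h2, h3⟩)).symm
  have hinner : ∀ j j' : Fin N,
      (∑ t ∈ Finset.range N,
        if ((j':ℕ) = (j:ℕ)+t ∧ 1 ≤ t ∧ m ∣ t) then A j * A j' else 0)
      = if ((j:ℕ) < (j':ℕ) ∧ ((j':ℕ)+1) % m = ((j:ℕ)+1) % m)
          then A j * A j' else 0 := by
    intro j j'
    by_cases hlt : (j:ℕ) < (j':ℕ)
    · have ht0 : (j':ℕ) - (j:ℕ) ∈ Finset.range N :=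
        Finset.mem_range.mpr (by omega)
      rw [Finset.sum_eq_single_of_mem ((j':ℕ) - (j:ℕ)) ht0
        (fun b _ hb => if_neg (by rintro ⟨h1, -, -⟩; omega))]
      have hd : (((j':ℕ)+1) % m = ((j:ℕ)+1) % m) ↔ m ∣ (j':ℕ) - (j:ℕ) := by
        have h2 := Nat.modEq_iff_dvd' (n := m) (a := (j:ℕ)+1) (b := (j':ℕ)+1) (by omega)
        unfold Nat.ModEq at h2
        rw [eq_comm, h2, (by omega : (j':ℕ)+1 - ((j:ℕ)+1) = (j':ℕ) - (j:ℕ))]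
      by_cases hdvd : m ∣ (j':ℕ) - (j:ℕ)
      · have hc1 : (j':ℕ) = (j:ℕ) + ((j':ℕ) - (j:ℕ)) ∧ 1 ≤ (j':ℕ) - (j:ℕ) ∧
            m ∣ (j':ℕ) - (j:ℕ) := ⟨by omega, by omega, hdvd⟩
        have hc2 : (j:ℕ) < (j':ℕ) ∧ ((j':ℕ)+1) % m = ((j:ℕ)+1) % m :=
          ⟨hlt, hd.mpr hdvd⟩
        rw [if_pos hc1, if_pos hc2]
      · rw [if_neg (by rintro ⟨-, -, h3⟩; exact hdvd h3),
            if_neg (by rintro ⟨-, h2⟩; exact hdvd (hd.mp h2))]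
    · rw [if_neg (by rintro ⟨h1, -⟩; exact hlt h1)]
      exact Finset.sum_eq_zero fun t _ => if_neg (by rintro ⟨h1, h2, -⟩; omega)
  have step2 : (∑ t ∈ (Finset.range N).filter (fun t => 1 ≤ t ∧ m ∣ t), autocorr N A t)
      = ∑ j : Fin N, ∑ j' : Fin N,
          if ((j:ℕ) < (j':ℕ) ∧ ((j':ℕ)+1) % m = ((j:ℕ)+1) % m)
            then A j * A j' else 0 := by
    rw [Finset.sum_filter]
    calc ∑ t ∈ Finset.range N, (if (1 ≤ t ∧ m ∣ t) then autocorr N A t else 0)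
        = ∑ t ∈ Finset.range N, ∑ j : Fin N,
            (if (1 ≤ t ∧ m ∣ t) then
              (if h : (j:ℕ)+t < N then A j * A ⟨(j:ℕ)+t, h⟩ else 0) else 0) := by
          refine Finset.sum_congr rfl fun t _ => ?_
          by_cases hq : 1 ≤ t ∧ m ∣ t <;> simp [hq, autocorr]
      _ = ∑ t ∈ Finset.range N, ∑ j : Fin N, ∑ j' : Fin N,
            (if ((j':ℕ) = (j:ℕ)+t ∧ 1 ≤ t ∧ m ∣ t) then A j * A j' else 0) := by
          exact Finset.sum_congr rfl fun t _ => Finset.sum_congr rfl fun j _ => hterm t j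
      _ = ∑ j : Fin N, ∑ t ∈ Finset.range N, ∑ j' : Fin N,
            (if ((j':ℕ) = (j:ℕ)+t ∧ 1 ≤ t ∧ m ∣ t) then A j * A j' else 0) :=
          Finset.sum_comm
      _ = ∑ j : Fin N, ∑ j' : Fin N, ∑ t ∈ Finset.range N,
            (if ((j':ℕ) = (j:ℕ)+t ∧ 1 ≤ t ∧ m ∣ t) then A j * A j' else 0) :=
          Finset.sum_congr rfl fun j _ => Finset.sum_comm
      _ = _ := Finset.sum_congr rfl fun j _ => Finset.sum_congr rfl fun j' _ => hinner j j'
  have split : ∀ j j' : Fin N,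
      (if ((j':ℕ)+1) % m = ((j:ℕ)+1) % m then A j * A j' else 0)
      = (if j' = j then A j * A j' else 0)
        + (if ((j:ℕ) < (j':ℕ) ∧ ((j':ℕ)+1) % m = ((j:ℕ)+1) % m) then A j * A j' else 0)
        + (if ((j':ℕ) < (j:ℕ) ∧ ((j':ℕ)+1) % m = ((j:ℕ)+1) % m) then A j * A j' else 0) := by
    intro j j'
    by_cases hc : ((j':ℕ)+1) % m = ((j:ℕ)+1) % m
    · rw [if_pos hc]
      rcases lt_trichotomy ((j:ℕ)) ((j':ℕ)) with h|h|h
      · rw [if_neg (by intro he; subst he; omega),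
            if_pos (⟨h, hc⟩ : (j:ℕ) < (j':ℕ) ∧ ((j':ℕ)+1) % m = ((j:ℕ)+1) % m),
            if_neg (by rintro ⟨h1, -⟩; omega), zero_add, add_zero]
      · rw [if_pos (Fin.ext h.symm), if_neg (by rintro ⟨h1, -⟩; omega),
            if_neg (by rintro ⟨h1, -⟩; omega), add_zero, add_zero]
      · rw [if_neg (by intro he; subst he; omega),
            if_neg (by rintro ⟨h1, -⟩; omega),
            if_pos (⟨h, hc⟩ : (j':ℕ) < (j:ℕ) ∧ ((j':ℕ)+1) % m = ((j:ℕ)+1) % m),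
            zero_add, zero_add]
    · rw [if_neg hc, if_neg (fun he => hc (by rw [he])),
          if_neg (by rintro ⟨-, h2⟩; exact hc h2),
          if_neg (by rintro ⟨-, h2⟩; exact hc h2)]
      simp
  have lower_eq : (∑ j : Fin N, ∑ j' : Fin N,
      if ((j':ℕ) < (j:ℕ) ∧ ((j':ℕ)+1) % m = ((j:ℕ)+1) % m) then A j * A j' else 0)
      = ∑ j : Fin N, ∑ j' : Fin N,
      if ((j:ℕ) < (j':ℕ) ∧ ((j':ℕ)+1) % m = ((j:ℕ)+1) % m) then A j * A j' else 0 := by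
    rw [Finset.sum_comm]
    refine Finset.sum_congr rfl fun j _ => Finset.sum_congr rfl fun j' _ => ?_
    have hiff : ((j:ℕ) < (j':ℕ) ∧ ((j:ℕ)+1) % m = ((j':ℕ)+1) % m)
        ↔ ((j:ℕ) < (j':ℕ) ∧ ((j':ℕ)+1) % m = ((j:ℕ)+1) % m) := by
      constructor <;> rintro ⟨a, b⟩ <;> exact ⟨a, b.symm⟩
    rw [if_congr hiff (mul_comm (A j') (A j)) rfl]
  have diag : (∑ j : Fin N, ∑ j' : Fin N, if j' = j then A j * A j' else 0)
      = autocorr N A 0 := by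
    rw [autocorr_zero']
    refine Finset.sum_congr rfl fun j _ => ?_
    rw [Finset.sum_ite_eq' Finset.univ j (fun j' => A j * A j'), if_pos (Finset.mem_univ j)]
  rw [step1, step2]
  calc ∑ j : Fin N, ∑ j' : Fin N,
        (if ((j':ℕ)+1) % m = ((j:ℕ)+1) % m then A j * A j' else 0)
      = ∑ j : Fin N, ∑ j' : Fin N,
          ((if j' = j then A j * A j' else 0)
          + (if ((j:ℕ) < (j':ℕ) ∧ ((j':ℕ)+1) % m = ((j:ℕ)+1) % m) then A j * A j' else 0)
          + (if ((j':ℕ) < (j:ℕ) ∧ ((j':ℕ)+1) % m = ((j:ℕ)+1) % m) then A j * A j' else 0)) :=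
        Finset.sum_congr rfl fun j _ => Finset.sum_congr rfl fun j' _ => split j j'
    _ = _ := by
        simp only [Finset.sum_add_distrib]
        rw [diag, lower_eq]
        ring

theorem base_seq_residue_sums_of_squares (n : ℕ) (hn : 1 ≤ n)
    (A B : Fin (n + 1) → ℤ) (C D : Fin n → ℤ)
    (hA : ∀ i, A i = 1 ∨ A i = -1) (hB : ∀ i, B i = 1 ∨ B i = -1)
    (hC : ∀ i, C i = 1 ∨ C i = -1) (hD : ∀ i, D i = 1 ∨ D i = -1)
    (h0 : autocorr (n + 1) A 0 + autocorr (n + 1) B 0 +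
      autocorr n C 0 + autocorr n D 0 = 4 * (n : ℤ) + 2)
    (hpos : ∀ i : ℕ, 1 ≤ i →
      autocorr (n + 1) A i + autocorr (n + 1) B i +
        autocorr n C i + autocorr n D i = 0) :
    ∀ m : ℕ, 1 ≤ m →
      (∑ i ∈ Finset.range m, (residueSum (n + 1) A m i) ^ 2) +
      (∑ i ∈ Finset.range m, (residueSum (n + 1) B m i) ^ 2) +
      (∑ i ∈ Finset.range m, (residueSum n C m i) ^ 2) +
      (∑ i ∈ Finset.range m, (residueSum n D m i) ^ 2) = 4 * (n : ℤ) + 2 := by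
  intro m hm
  rw [key_residue (n+1) m hm A, key_residue (n+1) m hm B,
      key_residue n m hm C, key_residue n m hm D]
  have hsub : (Finset.range n).filter (fun t => 1 ≤ t ∧ m ∣ t)
      ⊆ (Finset.range (n+1)).filter (fun t => 1 ≤ t ∧ m ∣ t) :=
    Finset.filter_subset_filter _ (Finset.range_subset_range.mpr (by omega))
  have hzero : ∀ (E : Fin n → ℤ), ∀ t ∈ (Finset.range (n+1)).filter (fun t => 1 ≤ t ∧ m ∣ t),
      t ∉ (Finset.range n).filter (fun t => 1 ≤ t ∧ m ∣ t) → autocorr n E t = 0 := by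
    intro E t ht hnt
    refine autocorr_of_ge' n t E ?_
    simp only [Finset.mem_filter, Finset.mem_range] at ht hnt
    omega
  rw [Finset.sum_subset hsub (hzero C), Finset.sum_subset hsub (hzero D)]
  have hS : (∑ t ∈ (Finset.range (n+1)).filter (fun t => 1 ≤ t ∧ m ∣ t), autocorr (n+1) A t)
      + (∑ t ∈ (Finset.range (n+1)).filter (fun t => 1 ≤ t ∧ m ∣ t), autocorr (n+1) B t)
      + (∑ t ∈ (Finset.range (n+1)).filter (fun t => 1 ≤ t ∧ m ∣ t), autocorr n C t)
      + (∑ t ∈ (Finset.range (n+1)).filter (fun t => 1 ≤ t ∧ m ∣ t), autocorr n D t) = 0 := by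
    rw [← Finset.sum_add_distrib, ← Finset.sum_add_distrib, ← Finset.sum_add_distrib]
    refine Finset.sum_eq_zero fun t ht => ?_
    exact hpos t (Finset.mem_filter.mp ht).2.1
  linarith [h0, hS]
end
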